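/- arXiv:1901.08381 — 5 statements merged into one kernel-verified Lean document; each statement's English description precedes it below -/
import Mathlib

section
/- Let Y_1, ..., Y_J be independent Bernoulli random variables where Y_i has success probability q^{i-1} p / (1 + q^{i-1} p), with p > 0 and 0 ≤ q < 1. Then X_J = Y_1 + ... + Y_J has the q-negative binomial distribution with parameters (q^{-J}, -q^J p): that is, for 0 ≤ k ≤ J, P(X_J = k) = (-q^J p)^k · ((q^{-J};q)_k / (q;q)_k) · ((-q^J p;q)_∞ / (-p;q)_∞). -/
open Finset

/-- The finite q-Pochhammer symbol `(a;q)_n = ∏_{j=0}^{n-1} (1 - a q^j)`. -/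
noncomputable def qPoch (q a : ℝ) (n : ℕ) : ℝ := ∏ j ∈ Finset.range n, (1 - a * q ^ j)

/-- The infinite q-Pochhammer symbol `(a;q)_∞ = ∏_{j≥0} (1 - a q^j)`. -/
noncomputable def qPochInf (q a : ℝ) : ℝ := ∏' j : ℕ, (1 - a * q ^ j)

lemma keySum (q : ℝ) (J k : ℕ) :
    (∏ j ∈ range k, (1 - q ^ (j + 1))) *
      ∑ A ∈ powersetCard k (range J), ∏ i ∈ A, q ^ i
    = q ^ k.choose 2 * ∏ j ∈ range k, (1 - q ^ (J - j)) := by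
  induction J generalizing k with
  | zero =>
    cases k with
    | zero => simp
    | succ m =>
      have h0 : ∏ j ∈ range (m + 1), (1 - q ^ (0 - j)) = 0 :=
        Finset.prod_eq_zero (i := 0) (mem_range.2 m.succ_pos) (by simp)
      rw [h0, mul_zero]
      refine mul_eq_zero.2 (Or.inr ?_)
      rw [Finset.powersetCard_eq_empty.2 (by simp), Finset.sum_empty]
  | succ J ih =>
    cases k with
    | zero => simp
    | succ m =>
      have hrec : ∑ A ∈ powersetCard (m + 1) (range (J + 1)), ∏ i ∈ A, q ^ i
          = (∑ A ∈ powersetCard (m + 1) (range J), ∏ i ∈ A, q ^ i)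
            + q ^ J * ∑ A ∈ powersetCard m (range J), ∏ i ∈ A, q ^ i := by
        have hJ : (J : ℕ) ∉ range J := by simp
        rw [Finset.range_add_one, Finset.powersetCard_succ_insert hJ,
          Finset.sum_union, Finset.sum_image, Finset.mul_sum]
        · congr 1
          refine Finset.sum_congr rfl fun A hA => ?_
          have hJA : (J : ℕ) ∉ A := fun h => hJ ((Finset.mem_powersetCard.1 hA).1 h)
          rw [Finset.prod_insert hJA]
        · intro A hA B hB hAB
          have h1 : (J : ℕ) ∉ A := fun h => hJ ((Finset.mem_powersetCard.1 hA).1 h)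
          have h2 : (J : ℕ) ∉ B := fun h => hJ ((Finset.mem_powersetCard.1 hB).1 h)
          rw [← Finset.erase_insert h1, ← Finset.erase_insert h2, hAB]
        · rw [Finset.disjoint_right]
          intro A hA hA'
          rcases Finset.mem_image.1 hA with ⟨B, hB, rfl⟩
          exact hJ ((Finset.mem_powersetCard.1 hA').1 (Finset.mem_insert_self _ _))
      have hN : ∏ j ∈ range (m + 1), (1 - q ^ (J + 1 - j))
          = (1 - q ^ (J + 1)) * ∏ j ∈ range m, (1 - q ^ (J - j)) := by
        rw [Finset.prod_range_succ']
        simp only [Nat.succ_sub_succ, Nat.sub_zero]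
        ring
      have hD : ∏ j ∈ range (m + 1), (1 - q ^ (j + 1))
          = (∏ j ∈ range m, (1 - q ^ (j + 1))) * (1 - q ^ (m + 1)) :=
        Finset.prod_range_succ _ _
      have hN2 : ∏ j ∈ range (m + 1), (1 - q ^ (J - j))
          = (∏ j ∈ range m, (1 - q ^ (J - j))) * (1 - q ^ (J - m)) :=
        Finset.prod_range_succ _ _
      have hC : (m + 1).choose 2 = m.choose 2 + m := by
        rw [Nat.choose_succ_succ, Nat.choose_one_right, add_comm]
      have ihm := ih m
      have ihm1 := ih (m + 1)
      rw [hrec, hN, hC, mul_add, hD]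
      rcases le_or_gt m J with hm | hm
      · have h1 : q ^ m * q ^ (J - m) = q ^ J := by
          rw [← pow_add, Nat.add_sub_cancel' hm]
        rw [hN2] at ihm1
        rw [hD] at ihm1
        have e1 : (∏ j ∈ range m, (1 - q ^ (j + 1))) * (1 - q ^ (m + 1)) *
            ∑ A ∈ powersetCard (m + 1) (range J), ∏ i ∈ A, q ^ i
            = q ^ ((m + 1).choose 2) * ((∏ j ∈ range m, (1 - q ^ (J - j))) * (1 - q ^ (J - m))) :=
          ihm1
        rw [hC] at e1
        calc (∏ j ∈ range m, (1 - q ^ (j + 1))) * (1 - q ^ (m + 1)) *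
              (∑ A ∈ powersetCard (m + 1) (range J), ∏ i ∈ A, q ^ i)
            + (∏ j ∈ range m, (1 - q ^ (j + 1))) * (1 - q ^ (m + 1)) *
              (q ^ J * ∑ A ∈ powersetCard m (range J), ∏ i ∈ A, q ^ i)
            = q ^ (m.choose 2 + m) * ((∏ j ∈ range m, (1 - q ^ (J - j))) * (1 - q ^ (J - m)))
              + (1 - q ^ (m + 1)) * q ^ J *
                ((∏ j ∈ range m, (1 - q ^ (j + 1))) *
                  ∑ A ∈ powersetCard m (range J), ∏ i ∈ A, q ^ i) := by
              rw [e1]; ring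
          _ = q ^ (m.choose 2 + m) * ((∏ j ∈ range m, (1 - q ^ (J - j))) * (1 - q ^ (J - m)))
              + (1 - q ^ (m + 1)) * q ^ J *
                (q ^ m.choose 2 * ∏ j ∈ range m, (1 - q ^ (J - j))) := by rw [ihm]
          _ = q ^ (m.choose 2 + m) * ((1 - q ^ (J + 1)) * ∏ j ∈ range m, (1 - q ^ (J - j))) := by
              rw [pow_add]
              linear_combination (-(q ^ m.choose 2) * ∏ j ∈ range m, (1 - q ^ (J - j))) * h1
      · have hNz : ∏ j ∈ range m, (1 - q ^ (J - j)) = 0 :=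
          Finset.prod_eq_zero (i := J) (mem_range.2 hm) (by simp)
        have hS1 : ∑ A ∈ powersetCard (m + 1) (range J), ∏ i ∈ A, q ^ i = 0 := by
          rw [Finset.powersetCard_eq_empty.2 (by simp [Finset.card_range]; omega), Finset.sum_empty]
        have hS2 : ∑ A ∈ powersetCard m (range J), ∏ i ∈ A, q ^ i = 0 := by
          rw [Finset.powersetCard_eq_empty.2 (by simp [Finset.card_range]; omega), Finset.sum_empty]
        rw [hS1, hS2, hNz]
        ring

lemma multGeom (q c : ℝ) (hq0 : 0 ≤ q) (hq1 : q < 1) (hc : 0 ≤ c) :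
    Multipliable (fun j : ℕ => 1 + c * q ^ j) := by
  have hpos : ∀ j : ℕ, (0:ℝ) < 1 + c * q ^ j := fun j => by positivity
  refine Real.multipliable_of_summable_log hpos ?_
  refine Summable.of_nonneg_of_le
    (fun j => Real.log_nonneg (le_add_of_nonneg_right (mul_nonneg hc (pow_nonneg hq0 j))))
    (fun j => ?_) ((summable_geometric_of_lt_one hq0 hq1).mul_left c)
  have := Real.log_le_sub_one_of_pos (hpos j)
  linarith

lemma one_le_tprodGeom (q c : ℝ) (hq0 : 0 ≤ q) (hc : 0 ≤ c) :
    (1:ℝ) ≤ ∏' j : ℕ, (1 + c * q ^ j) := by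
  by_cases hM : Multipliable (fun j : ℕ => 1 + c * q ^ j)
  · refine le_hasProd_of_le_prod hM.hasProd fun s => ?_
    calc (1:ℝ) = ∏ _i ∈ s, 1 := by simp
    _ ≤ ∏ i ∈ s, (1 + c * q ^ i) :=
      Finset.prod_le_prod (fun i _ => zero_le_one)
        (fun i _ => le_add_of_nonneg_right (mul_nonneg hc (pow_nonneg hq0 i)))
  · rw [tprod_eq_one_of_not_multipliable hM]

lemma tprodSplit (q c : ℝ) (hq0 : 0 ≤ q) (hq1 : q < 1) (hc : 0 ≤ c) (J : ℕ) :
    ∏' j : ℕ, (1 + c * q ^ j)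
      = (∏ i ∈ range J, (1 + c * q ^ i)) * ∏' j : ℕ, (1 + c * q ^ J * q ^ j) := by
  have heq : ∀ n : ℕ, 1 + c * q ^ J * q ^ n = 1 + c * q ^ (n + J) := by
    intro n; rw [pow_add]; ring
  have hM : Multipliable (fun n : ℕ => 1 + c * q ^ (n + J)) :=
    (multGeom q (c * q ^ J) hq0 hq1 (mul_nonneg hc (pow_nonneg hq0 J))).congr heq
  rw [← Multipliable.prod_mul_tprod_nat_mul' (f := fun j : ℕ => 1 + c * q ^ j) (k := J) hM]
  congr 1
  exact tprod_congr fun j => (heq j).symm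

/-- Sum of independent Bernoulli random variables `Y_1, ..., Y_J`, where `Y_i` has
success probability `q^{i-1} p / (1 + q^{i-1} p)`, is a q-negative binomial with
parameters `(q^{-J}, -q^J p)`: for `0 ≤ k ≤ J`,
`P(X_J = k) = (-q^J p)^k ((q^{-J};q)_k/(q;q)_k) ((-q^J p;q)_∞/(-p;q)_∞)`.
The probability `P(X_J = k)` is written out as the sum over binary outcome vectors
with exactly `k` successes of the product of the individual Bernoulli probabilities. -/
theorem sum_bernoulli_geometric_is_qNB (q p : ℝ) (hq0 : 0 < q) (hq1 : q < 1)
    (hp : 0 < p) (J : ℕ) (hJ : 0 < J) (k : ℕ) (hk : k ≤ J) :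
    ∑ h ∈ Finset.univ.filter
        (fun h : Fin J → Bool => (Finset.univ.filter (fun i => h i = true)).card = k),
      ∏ i : Fin J,
        (if h i then q ^ (i : ℕ) * p / (1 + q ^ (i : ℕ) * p)
         else 1 / (1 + q ^ (i : ℕ) * p))
      = (-(q ^ J * p)) ^ k * (qPoch q (q ^ (-(J : ℤ))) k / qPoch q q k) *
        (qPochInf q (-(q ^ J * p)) / qPochInf q (-p)) := by
  have hqne : (q:ℝ) ≠ 0 := ne_of_gt hq0
  have hden : ∀ n : ℕ, (0:ℝ) < 1 + q ^ n * p := fun n => by positivity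
  -- Step 1: convert to a sum over subsets
  have step1 : ∑ h ∈ Finset.univ.filter
        (fun h : Fin J → Bool => (Finset.univ.filter (fun i => h i = true)).card = k),
      ∏ i : Fin J,
        (if h i then q ^ (i : ℕ) * p / (1 + q ^ (i : ℕ) * p)
         else 1 / (1 + q ^ (i : ℕ) * p))
      = ∑ A ∈ powersetCard k (Finset.univ : Finset (Fin J)),
          (∏ i ∈ A, q ^ (i : ℕ) * p / (1 + q ^ (i : ℕ) * p)) *
          ∏ i ∈ Finset.univ \ A, 1 / (1 + q ^ (i : ℕ) * p) := by
    refine Finset.sum_nbij' (fun h => Finset.univ.filter (fun i => h i = true))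
      (fun A => fun i => decide (i ∈ A)) ?_ ?_ ?_ ?_ ?_
    · intro h hh
      rw [Finset.mem_powersetCard]
      exact ⟨Finset.filter_subset _ _, (Finset.mem_filter.1 hh).2⟩
    · intro A hA
      rw [Finset.mem_filter]
      refine ⟨Finset.mem_univ _, ?_⟩
      have : Finset.univ.filter (fun i => decide (i ∈ A) = true) = A := by
        ext i; simp
      rw [this]
      exact (Finset.mem_powersetCard.1 hA).2
    · intro h hh
      funext i
      simp
    · intro A hA
      ext i; simp
    · intro h hh
      rw [Finset.prod_ite, Finset.filter_not]
  -- Step 2: factor each summand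
  have step2 : ∀ A ∈ powersetCard k (Finset.univ : Finset (Fin J)),
      (∏ i ∈ A, q ^ (i : ℕ) * p / (1 + q ^ (i : ℕ) * p)) *
        ∏ i ∈ Finset.univ \ A, 1 / (1 + q ^ (i : ℕ) * p)
      = (∏ i ∈ A, q ^ (i : ℕ)) * p ^ k *
          ∏ i : Fin J, 1 / (1 + q ^ (i : ℕ) * p) := by
    intro A hA
    obtain ⟨hsub, hcard⟩ := Finset.mem_powersetCard.1 hA
    have e1 : ∀ i : Fin J, q ^ (i : ℕ) * p / (1 + q ^ (i : ℕ) * p)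
        = q ^ (i : ℕ) * p * (1 / (1 + q ^ (i : ℕ) * p)) := fun i => by
      field_simp
    calc (∏ i ∈ A, q ^ (i : ℕ) * p / (1 + q ^ (i : ℕ) * p)) *
          ∏ i ∈ Finset.univ \ A, 1 / (1 + q ^ (i : ℕ) * p)
        = (∏ i ∈ A, q ^ (i : ℕ) * p * (1 / (1 + q ^ (i : ℕ) * p))) *
          ∏ i ∈ Finset.univ \ A, 1 / (1 + q ^ (i : ℕ) * p) := by
          rw [Finset.prod_congr rfl fun i _ => e1 i]
      _ = ((∏ i ∈ A, q ^ (i : ℕ)) * ∏ i ∈ A, p) *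
          ((∏ i ∈ A, 1 / (1 + q ^ (i : ℕ) * p)) *
            ∏ i ∈ Finset.univ \ A, 1 / (1 + q ^ (i : ℕ) * p)) := by
          rw [Finset.prod_mul_distrib, Finset.prod_mul_distrib]
          ring
      _ = (∏ i ∈ A, q ^ (i : ℕ)) * p ^ k * ∏ i : Fin J, 1 / (1 + q ^ (i : ℕ) * p) := by
          rw [Finset.prod_const, hcard, mul_comm (∏ i ∈ A, (1 / (1 + q ^ (i:ℕ) * p))),
            Finset.prod_sdiff hsub]
  rw [step1, Finset.sum_congr rfl step2, ← Finset.sum_mul, ← Finset.sum_mul]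
  -- Step 3: subset sum over Fin J → subset sum over range J
  have step3 : ∑ A ∈ powersetCard k (Finset.univ : Finset (Fin J)), ∏ i ∈ A, q ^ (i : ℕ)
      = ∑ B ∈ powersetCard k (range J), ∏ i ∈ B, q ^ i := by
    rw [← Nat.Iio_eq_range, ← Fin.map_valEmbedding_univ, Finset.powersetCard_map,
      Finset.sum_map]
    refine Finset.sum_congr rfl fun A _ => ?_
    have hA : ((Finset.mapEmbedding Fin.valEmbedding).toEmbedding A)
        = A.map Fin.valEmbedding := rfl
    rw [hA, Finset.prod_map]
    rfl
  -- notation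
  set D : ℝ := ∏ j ∈ range k, (1 - q ^ (j + 1)) with hDdef
  set N : ℝ := ∏ j ∈ range k, (1 - q ^ (J - j)) with hNdef
  have hDpos : 0 < D := Finset.prod_pos fun j _ => by
    have : q ^ (j + 1) < 1 := pow_lt_one₀ (le_of_lt hq0) hq1 (Nat.succ_ne_zero j)
    linarith
  have hkey := keySum q J k
  have hSval : ∑ B ∈ powersetCard k (range J), ∏ i ∈ B, q ^ i
      = q ^ k.choose 2 * N / D := by
    field_simp
    linarith [hkey]
  -- Step 5: infinite product ratio
  have hq0' : (0:ℝ) ≤ q := le_of_lt hq0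
  have hp' : (0:ℝ) ≤ p := le_of_lt hp
  set T : ℝ := ∏' j : ℕ, (1 + p * q ^ J * q ^ j) with hTdef
  have hT1 : (1:ℝ) ≤ T := one_le_tprodGeom q (p * q ^ J) hq0' (by positivity)
  have hTne : T ≠ 0 := by linarith
  have hInf1 : qPochInf q (-(q ^ J * p)) = T := by
    rw [qPochInf]
    exact tprod_congr fun j => by ring
  have hInf2 : qPochInf q (-p) = (∏ i ∈ range J, (1 + p * q ^ i)) * T := by
    rw [qPochInf]
    have : ∏' j : ℕ, (1 - (-p) * q ^ j) = ∏' j : ℕ, (1 + p * q ^ j) :=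
      tprod_congr fun j => by ring
    rw [this, tprodSplit q p hq0' hq1 hp' J]
  -- Step 6: qPoch identities
  have hPoch2 : qPoch q q k = D := by
    rw [qPoch]
    exact Finset.prod_congr rfl fun j _ => by rw [pow_succ']
  have hPoch1 : (-(q ^ J * p)) ^ k * qPoch q (q ^ (-(J : ℤ))) k
      = p ^ k * q ^ k.choose 2 * N := by
    have hconst : (-(q ^ J * p)) ^ k = ∏ _j ∈ range k, (-(q ^ J * p)) := by
      rw [Finset.prod_const, Finset.card_range]
    rw [qPoch, hconst, ← Finset.prod_mul_distrib, hNdef]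
    have hq2 : ∀ j ∈ range k, -(q ^ J * p) * (1 - q ^ (-(J:ℤ)) * q ^ j)
        = p * q ^ j * (1 - q ^ (J - j)) := by
      intro j hj
      have hjk : j < k := mem_range.1 hj
      have hjJ : j ≤ J := le_trans (le_of_lt hjk) hk
      have hz : (q:ℝ) ^ (-(J:ℤ)) = (q ^ J)⁻¹ := by
        rw [zpow_neg, zpow_natCast]
      have h3 : q ^ j * q ^ (J - j) = q ^ J := by
        rw [← pow_add, Nat.add_sub_cancel' hjJ]
      have hJne : (q:ℝ) ^ J ≠ 0 := pow_ne_zero _ hqne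
      rw [hz]
      field_simp
      linear_combination h3
    rw [Finset.prod_congr rfl hq2, Finset.prod_mul_distrib, Finset.prod_mul_distrib,
      Finset.prod_const, Finset.card_range, Finset.prod_pow_eq_pow_sum]
    congr 2
    rw [Finset.sum_range_id, Nat.choose_two_right]
  -- finite product of denominators
  have hfin : ∏ i : Fin J, 1 / (1 + q ^ (i : ℕ) * p)
      = 1 / ∏ i ∈ range J, (1 + p * q ^ i) := by
    rw [Fin.prod_univ_eq_prod_range (fun n => 1 / (1 + q ^ n * p)) J]
    rw [Finset.prod_div_distrib, Finset.prod_const_one]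
    congr 1
    exact Finset.prod_congr rfl fun i _ => by ring
  have hfinpos : (0:ℝ) < ∏ i ∈ range J, (1 + p * q ^ i) :=
    Finset.prod_pos fun i _ => by positivity
  rw [step3, hSval, hInf1, hInf2, hPoch2, hfin]
  have : (-(q ^ J * p)) ^ k * (qPoch q (q ^ (-(J : ℤ))) k / D) = p ^ k * q ^ k.choose 2 * N / D := by
    rw [← hPoch1]; ring
  rw [mul_div_assoc] at this ⊢
  rw [this]
  have hT : T / ((∏ i ∈ range J, (1 + p * q ^ i)) * T) = 1 / ∏ i ∈ range J, (1 + p * q ^ i) := by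
    rw [mul_comm, ← div_div, div_self hTne]
  rw [hT]
  ring
end

section
/- Let m be a q-Poisson random variable with parameter p ∈ (0,1), i.e. P(m = l) = p^l (p;q)_∞ / (q;q)_l for l ≥ 0. Then for any bounded function B : ℤ → ℝ and any z ∈ ℤ, B(z) = (1/(p;q)_∞) ∑_{k≥0} ((-1)^k q^{k(k-1)/2} / (q;q)_k) p^k E[B(z - m - k)], where the expectation is over m. -/
section basics
variable {q a : ℝ} (hq0 : 0 < q) (hq1 : q < 1) (ha0 : 0 < a) (ha1 : a < 1)
include hq0 hq1 ha0 ha1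

lemma factor_pos (j : ℕ) : 0 < 1 - a * q ^ j := by
  have h1 : q ^ j ≤ 1 := pow_le_one₀ hq0.le hq1.le
  have h2 : a * q ^ j ≤ a * 1 := by
    apply mul_le_mul_of_nonneg_left h1 ha0.le
  nlinarith

lemma factor_le_one (j : ℕ) : 1 - a * q ^ j ≤ 1 := by
  have : 0 < q ^ j := pow_pos hq0 j
  nlinarith

lemma log_summable : Summable fun j : ℕ => Real.log (1 - a * q ^ j) := by
  apply Summable.of_norm_bounded (g := fun j => (a / (1 - a)) * q ^ j)
    ((summable_geometric_of_lt_one hq0.le hq1).mul_left _)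
  intro j
  set x := a * q ^ j with hx
  have hq : 0 < q ^ j := pow_pos hq0 j
  have hx0 : 0 < x := mul_pos ha0 hq
  have hxa : x ≤ a := by
    have h1 : q ^ j ≤ 1 := pow_le_one₀ hq0.le hq1.le
    nlinarith
  have hx1 : 0 < 1 - x := factor_pos hq0 hq1 ha0 ha1 j
  have hlog : Real.log (1 - x) ≤ 0 := Real.log_nonpos (by linarith) (by linarith)
  rw [Real.norm_eq_abs, abs_of_nonpos hlog]
  have h2 : -Real.log (1 - x) = Real.log (1 - x)⁻¹ := (Real.log_inv _).symm
  rw [h2]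
  have h3 : Real.log (1 - x)⁻¹ ≤ (1 - x)⁻¹ - 1 :=
    Real.log_le_sub_one_of_pos (by positivity)
  have h4 : (1 - x)⁻¹ - 1 = x / (1 - x) := by field_simp; ring
  have h5 : x / (1 - x) ≤ x / (1 - a) := by
    apply div_le_div_of_nonneg_left hx0.le (by linarith) (by linarith)
  have h6 : x / (1 - a) = a / (1 - a) * q ^ j := by rw [hx]; ring
  linarith

lemma qPochInf_eq_exp :
    qPochInf q a = Real.exp (∑' j : ℕ, Real.log (1 - a * q ^ j)) := by
  have h := Real.rexp_tsum_eq_tprod (ι := ℕ) (f := fun n => 1 - a * q ^ n)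
    (fun n => factor_pos hq0 hq1 ha0 ha1 n) (log_summable hq0 hq1 ha0 ha1)
  exact h.symm

lemma qPochInf_pos : 0 < qPochInf q a := by
  rw [qPochInf_eq_exp hq0 hq1 ha0 ha1]; exact Real.exp_pos _

lemma qPochInf_le_one : qPochInf q a ≤ 1 := by
  rw [qPochInf_eq_exp hq0 hq1 ha0 ha1, Real.exp_le_one_iff]
  exact tsum_nonpos fun j => Real.log_nonpos
    (by have := factor_pos hq0 hq1 ha0 ha1 j; linarith)
    (factor_le_one hq0 hq1 ha0 ha1 j)

lemma qPochInf_le_qPoch (n : ℕ) : qPochInf q a ≤ qPoch q a n := by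
  rw [qPochInf_eq_exp hq0 hq1 ha0 ha1]
  have h1 : qPoch q a n = Real.exp (∑ j ∈ Finset.range n, Real.log (1 - a * q ^ j)) := by
    rw [Real.exp_sum, qPoch]
    exact Finset.prod_congr rfl fun j _ =>
      (Real.exp_log (factor_pos hq0 hq1 ha0 ha1 j)).symm
  rw [h1, Real.exp_le_exp]
  have h8 := Summable.sum_le_tsum (f := fun j : ℕ => -Real.log (1 - a * q ^ j)) (Finset.range n)
    (fun j _ => by
      have h5 := factor_pos hq0 hq1 ha0 ha1 j
      have h6 := factor_le_one hq0 hq1 ha0 ha1 j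
      show (0:ℝ) ≤ -Real.log (1 - a * q ^ j)
      have := Real.log_nonpos (by linarith) (by linarith : (1:ℝ) - a * q ^ j ≤ 1)
      linarith)
    ((log_summable hq0 hq1 ha0 ha1).neg)
  simp only [tsum_neg, Finset.sum_neg_distrib] at h8
  linarith

lemma qPoch_pos (n : ℕ) : 0 < qPoch q a n :=
  lt_of_lt_of_le (qPochInf_pos hq0 hq1 ha0 ha1) (qPochInf_le_qPoch hq0 hq1 ha0 ha1 n)

lemma qPoch_le_one (n : ℕ) : qPoch q a n ≤ 1 :=
  Finset.prod_le_one (fun j _ => (factor_pos hq0 hq1 ha0 ha1 j).le)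
    (fun j _ => factor_le_one hq0 hq1 ha0 ha1 j)

end basics

noncomputable def gauss (q : ℝ) (n k : ℕ) : ℝ :=
  if k ≤ n then qPoch q q n / (qPoch q q k * qPoch q q (n - k)) else 0

lemma qPoch_zero (q a : ℝ) : qPoch q a 0 = 1 := by simp [qPoch]

lemma qPoch_succ (q a : ℝ) (n : ℕ) :
    qPoch q a (n + 1) = qPoch q a n * (1 - a * q ^ n) := Finset.prod_range_succ _ _

lemma triangle_succ (j : ℕ) : (j + 1) * j / 2 = j * (j - 1) / 2 + j := by
  have h2 : 2 ∣ j * (j - 1) := by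
    cases j with
    | zero => simp
    | succ m =>
      simpa [Nat.succ_sub_one, Nat.mul_comm] using (Nat.even_mul_succ_self m).two_dvd
  have h1 : (j + 1) * j = j * (j - 1) + 2 * j := by
    cases j with
    | zero => rfl
    | succ m => simp only [Nat.succ_sub_one]; ring
  obtain ⟨t, ht⟩ := h2
  rw [ht] at h1 ⊢
  generalize hB : (j + 1) * j = b at h1 ⊢
  omega

section gausslemmas
variable {q : ℝ} (hq0 : 0 < q) (hq1 : q < 1)
include hq0 hq1

lemma qPochq_pos (n : ℕ) : 0 < qPoch q q n := qPoch_pos hq0 hq1 hq0 hq1 n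

lemma gauss_pascal (n k : ℕ) (hk : 1 ≤ k) :
    gauss q (n + 1) k = q ^ k * gauss q n k + gauss q n (k - 1) := by
  obtain ⟨j, rfl⟩ := Nat.exists_eq_add_of_le hk
  rcases le_or_gt (1 + j) n with hkn | hkn
  · -- 1 + j ≤ n
    obtain ⟨m, hm⟩ := Nat.exists_eq_add_of_le hkn
    have g1 : gauss q (n + 1) (1 + j) =
        qPoch q q (n + 1) / (qPoch q q (1 + j) * qPoch q q (m + 1)) := by
      rw [gauss, if_pos (by omega), show n + 1 - (1 + j) = m + 1 by omega]
    have g2 : gauss q n (1 + j) = qPoch q q n / (qPoch q q (1 + j) * qPoch q q m) := by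
      rw [gauss, if_pos (by omega), show n - (1 + j) = m by omega]
    have g3 : gauss q n (1 + j - 1) = qPoch q q n / (qPoch q q j * qPoch q q (m + 1)) := by
      rw [gauss, if_pos (by omega), show 1 + j - 1 = j by omega, show n - j = m + 1 by omega]
    rw [g1, g2, g3]
    have e1 : qPoch q q (n + 1) = qPoch q q n * (1 - q * q ^ n) := qPoch_succ q q n
    have e2 : qPoch q q (1 + j) = qPoch q q j * (1 - q * q ^ j) := by
      rw [show 1 + j = j + 1 by omega, qPoch_succ]
    have e3 : qPoch q q (m + 1) = qPoch q q m * (1 - q * q ^ m) := qPoch_succ q q m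
    have hQn := (qPochq_pos hq0 hq1 n).ne'
    have hQj := (qPochq_pos hq0 hq1 j).ne'
    have hQm := (qPochq_pos hq0 hq1 m).ne'
    have hfj : (1 : ℝ) - q * q ^ j ≠ 0 := (factor_pos hq0 hq1 hq0 hq1 j).ne'
    have hfm : (1 : ℝ) - q * q ^ m ≠ 0 := (factor_pos hq0 hq1 hq0 hq1 m).ne'
    have hqn : q * q ^ n = (q ^ (1 + j)) * (q * q ^ m) := by
      rw [hm]
      ring
    rw [e1, e2, e3]
    field_simp
    rw [hqn]
    ring
  · rcases Nat.lt_or_ge n (1 + j - 1) with hn' | hn'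
    · -- 1 + j > n + 1 : everything vanishes
      have g1 : gauss q (n + 1) (1 + j) = 0 := by rw [gauss, if_neg (by omega)]
      have g2 : gauss q n (1 + j) = 0 := by rw [gauss, if_neg (by omega)]
      have g3 : gauss q n (1 + j - 1) = 0 := by rw [gauss, if_neg (by omega)]
      rw [g1, g2, g3]
      ring
    · -- 1 + j = n + 1
      have hj : j = n := by omega
      subst hj
      have g1 : gauss q (j + 1) (1 + j) = 1 := by
        rw [gauss, if_pos (by omega), show j + 1 - (1 + j) = 0 by omega, qPoch_zero,
          show 1 + j = j + 1 by omega, mul_one, div_self (qPochq_pos hq0 hq1 (j + 1)).ne']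
      have g2 : gauss q j (1 + j) = 0 := by rw [gauss, if_neg (by omega)]
      have g3 : gauss q j (1 + j - 1) = 1 := by
        rw [gauss, if_pos (by omega), show 1 + j - 1 = j by omega, Nat.sub_self, qPoch_zero,
          mul_one, div_self (qPochq_pos hq0 hq1 j).ne']
      rw [g1, g2, g3]
      ring

lemma gauss_alt_sum (n : ℕ) :
    ∑ k ∈ Finset.range (n + 2),
      (-1 : ℝ) ^ k * q ^ (k * (k - 1) / 2) * gauss q (n + 1) k = 0 := by
  set c : ℕ → ℝ := fun k => (-1 : ℝ) ^ k * q ^ (k * (k - 1) / 2) with hc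
  have hcs : ∀ j : ℕ, c (j + 1) = -(q ^ j * c j) := by
    intro j
    simp only [hc, Nat.add_sub_cancel]
    rw [triangle_succ, pow_add, pow_succ]
    ring
  set e : ℕ → ℝ := fun t => c t * q ^ t * gauss q n t with he
  have hterm : ∀ j, c (j + 1) * gauss q (n + 1) (j + 1) = e (j + 1) - e j := by
    intro j
    rw [gauss_pascal hq0 hq1 n (j + 1) (by omega)]
    simp only [he, Nat.add_sub_cancel]
    rw [hcs j]
    ring
  rw [Finset.sum_range_succ']
  have h0 : c 0 * gauss q (n + 1) 0 = 1 := by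
    simp only [hc]
    rw [gauss, if_pos (by omega), Nat.sub_zero, qPoch_zero, one_mul,
      div_self (qPochq_pos hq0 hq1 (n + 1)).ne']
    ring
  calc (∑ j ∈ Finset.range (n + 1), c (j + 1) * gauss q (n + 1) (j + 1)) +
        c 0 * gauss q (n + 1) 0
      = (∑ j ∈ Finset.range (n + 1), (e (j + 1) - e j)) + 1 := by
        rw [h0, Finset.sum_congr rfl fun j _ => hterm j]
    _ = (e (n + 1) - e 0) + 1 := by rw [Finset.sum_range_sub]
    _ = 0 := by
        have he1 : e (n + 1) = 0 := by
          simp only [he]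
          rw [gauss, if_neg (by omega)]
          ring
        have he0 : e 0 = 1 := by
          simp only [he, hc]
          rw [gauss, if_pos (by omega), Nat.sub_zero, qPoch_zero, one_mul,
            div_self (qPochq_pos hq0 hq1 n).ne']
          ring
        rw [he1, he0]
        ring

lemma coeff_zero (n : ℕ) (hn : 1 ≤ n) :
    ∑ k ∈ Finset.range (n + 1),
      (-1 : ℝ) ^ k * q ^ (k * (k - 1) / 2) / (qPoch q q k * qPoch q q (n - k)) = 0 := by
  obtain ⟨m, rfl⟩ : ∃ m, n = m + 1 := ⟨n - 1, by omega⟩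
  have hQn := (qPochq_pos hq0 hq1 (m + 1)).ne'
  have key := gauss_alt_sum hq0 hq1 m
  have : ∑ k ∈ Finset.range (m + 2),
      (-1 : ℝ) ^ k * q ^ (k * (k - 1) / 2) / (qPoch q q k * qPoch q q (m + 1 - k)) =
      (∑ k ∈ Finset.range (m + 2),
        (-1 : ℝ) ^ k * q ^ (k * (k - 1) / 2) * gauss q (m + 1) k) / qPoch q q (m + 1) := by
    rw [Finset.sum_div]
    refine Finset.sum_congr rfl fun k hk => ?_
    rw [Finset.mem_range] at hk
    rw [gauss, if_pos (by omega)]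
    have h1 := (qPochq_pos hq0 hq1 k).ne'
    have h2 := (qPochq_pos hq0 hq1 (m + 1 - k)).ne'
    field_simp
  rw [show m + 1 + 1 = m + 2 from rfl, this, key, zero_div]

end gausslemmas

/-- Decoupling via a q-Poisson random variable `m` with `P(m = l) = p^l (p;q)_∞/(q;q)_l`:
for any bounded `B : ℤ → ℝ` and any `z ∈ ℤ`,
`B(z) = (1/(p;q)_∞) ∑_{k≥0} ((-1)^k q^{k(k-1)/2}/(q;q)_k) p^k E[B(z - m - k)]`,
where the expectation over `m` is written out as a series. -/
theorem qPoisson_shift_identity (q p : ℝ) (hq0 : 0 < q) (hq1 : q < 1)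
    (hp0 : 0 < p) (hp1 : p < 1) (B : ℤ → ℝ) (C : ℝ) (hB : ∀ n, |B n| ≤ C) (z : ℤ) :
    B z = (1 / qPochInf q p) *
      ∑' k : ℕ, ((-1 : ℝ) ^ k * q ^ (k * (k - 1) / 2) / qPoch q q k) * p ^ k *
        ∑' l : ℕ, p ^ l * (qPochInf q p / qPoch q q l) * B (z - l - k) := by
  have hC0 : 0 ≤ C := le_trans (abs_nonneg _) (hB 0)
  set P := qPochInf q p with hP
  have hPpos : 0 < P := qPochInf_pos hq0 hq1 hp0 hp1
  have hPle : P ≤ 1 := qPochInf_le_one hq0 hq1 hp0 hp1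
  set c := qPochInf q q with hcdef
  have hcpos : 0 < c := qPochInf_pos hq0 hq1 hq0 hq1
  have hQ : ∀ n, c ≤ qPoch q q n := qPochInf_le_qPoch hq0 hq1 hq0 hq1
  have hQpos : ∀ n, 0 < qPoch q q n := qPochq_pos hq0 hq1
  set a : ℕ → ℝ := fun k => ((-1 : ℝ) ^ k * q ^ (k * (k - 1) / 2) / qPoch q q k) * p ^ k
    with ha
  set bb : ℕ → ℝ := fun l => p ^ l * (P / qPoch q q l) with hbb
  set f : ℕ × ℕ → ℝ := fun kl => a kl.1 * (bb kl.2 * B (z - kl.2 - kl.1)) with hfdef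
  -- summability
  have hgeo : Summable fun n : ℕ => p ^ n := summable_geometric_of_lt_one hp0.le hp1
  have hg : Summable fun kl : ℕ × ℕ => ((1 / c) * p ^ kl.1) * ((C / c) * p ^ kl.2) := by
    apply Summable.mul_of_nonneg (hgeo.mul_left (1 / c)) (hgeo.mul_left (C / c))
    · intro i; positivity
    · intro i; positivity
  have hf : Summable f := by
    apply Summable.of_norm_bounded hg
    rintro ⟨k, l⟩
    have hak : |a k| ≤ (1 / c) * p ^ k := by
      have h1 : |a k| = (q ^ (k * (k - 1) / 2) / qPoch q q k) * p ^ k := by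
        rw [ha]
        rw [abs_mul, abs_div, abs_mul, abs_pow, abs_pow, abs_pow, abs_neg, abs_one, one_pow,
          one_mul, abs_of_pos hq0, abs_of_pos hp0, abs_of_pos (hQpos k)]
      rw [h1]
      have h2 : q ^ (k * (k - 1) / 2) / qPoch q q k ≤ 1 / c := by
        apply div_le_div₀ (by norm_num) (pow_le_one₀ hq0.le hq1.le) hcpos (hQ k)
      have := pow_pos hp0 k
      nlinarith
    have hbl : |bb l * B (z - l - k)| ≤ (C / c) * p ^ l := by
      rw [abs_mul]
      have h1 : |bb l| ≤ (1 / c) * p ^ l := by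
        rw [hbb]
        have h2 : P / qPoch q q l ≤ 1 / c := div_le_div₀ (by norm_num) hPle hcpos (hQ l)
        have h3 : |p ^ l * (P / qPoch q q l)| = p ^ l * (P / qPoch q q l) :=
          abs_of_pos (mul_pos (pow_pos hp0 l) (div_pos hPpos (hQpos l)))
        rw [h3]
        have := pow_pos hp0 l
        nlinarith
      have h4 := hB (z - l - k)
      have h5 : (0:ℝ) ≤ |bb l| := abs_nonneg _
      have h6 : (0:ℝ) ≤ |B (z - l - k)| := abs_nonneg _
      calc |bb l| * |B (z - l - k)| ≤ ((1 / c) * p ^ l) * C := by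
            apply mul_le_mul h1 h4 h6 (by positivity)
        _ = (C / c) * p ^ l := by ring
    calc ‖f (k, l)‖ = |a k| * |bb l * B (z - l - k)| := by
          rw [hfdef, Real.norm_eq_abs, abs_mul]
      _ ≤ ((1 / c) * p ^ k) * ((C / c) * p ^ l) := by
          apply mul_le_mul hak hbl (abs_nonneg _) (by positivity)
  -- main chain
  have step1 : (∑' k : ℕ, a k * ∑' l : ℕ, bb l * B (z - l - k)) = ∑' kl : ℕ × ℕ, f kl := by
    rw [Summable.tsum_prod' hf fun k => hf.prod_factor k]
    refine tsum_congr fun k => ?_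
    rw [← tsum_mul_left]
  have step2 : (∑' kl : ℕ × ℕ, f kl) = ∑' n : ℕ, ∑ kl ∈ Finset.HasAntidiagonal.antidiagonal n, f kl := by
    have hsig : Summable (f ∘ Finset.HasAntidiagonal.sigmaAntidiagonalEquivProd) :=
      Finset.HasAntidiagonal.sigmaAntidiagonalEquivProd.summable_iff.mpr hf
    calc (∑' kl : ℕ × ℕ, f kl)
        = ∑' x : Σ n : ℕ, {x // x ∈ Finset.HasAntidiagonal.antidiagonal n},
            (f ∘ Finset.HasAntidiagonal.sigmaAntidiagonalEquivProd) x :=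
          (Finset.HasAntidiagonal.sigmaAntidiagonalEquivProd.tsum_eq f).symm
      _ = ∑' (n : ℕ) (x : {x // x ∈ Finset.HasAntidiagonal.antidiagonal n}), f ↑x :=
          Summable.tsum_sigma' (fun n => (hasSum_fintype _).summable) hsig
      _ = ∑' n : ℕ, ∑ kl ∈ Finset.HasAntidiagonal.antidiagonal n, f kl :=
          tsum_congr fun n => Finset.tsum_subtype _ _
  have hterm0 : ∑ kl ∈ Finset.HasAntidiagonal.antidiagonal 0, f kl = P * B z := by
    rw [Finset.Nat.antidiagonal_zero, Finset.sum_singleton]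
    rw [hfdef, ha, hbb]
    simp [qPoch_zero]
  have htermn : ∀ n : ℕ, n ≠ 0 → ∑ kl ∈ Finset.HasAntidiagonal.antidiagonal n, f kl = 0 := by
    intro n hn
    rw [Finset.Nat.sum_antidiagonal_eq_sum_range_succ_mk]
    have hrw : ∀ k ∈ Finset.range (n + 1), f (k, n - k) =
        (P * p ^ n) * ((-1 : ℝ) ^ k * q ^ (k * (k - 1) / 2) /
          (qPoch q q k * qPoch q q (n - k))) * B (z - n) := by
      intro k hk
      rw [Finset.mem_range] at hk
      have hkn : k ≤ n := by omega
      have hBarg : z - ((n - k : ℕ) : ℤ) - (k : ℤ) = z - (n : ℤ) := by omega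
      rw [hfdef, ha, hbb]
      simp only
      rw [hBarg]
      have hpow : p ^ k * p ^ (n - k) = p ^ n := by
        rw [← pow_add]; congr 1; omega
      have h1 := (hQpos k).ne'
      have h2 := (hQpos (n - k)).ne'
      field_simp
      rw [← hpow]
      ring
    rw [Finset.sum_congr rfl hrw, ← Finset.sum_mul, ← Finset.mul_sum,
      coeff_zero hq0 hq1 n (by omega)]
    ring
  have step3 : (∑' n : ℕ, ∑ kl ∈ Finset.HasAntidiagonal.antidiagonal n, f kl) = P * B z := by
    rw [tsum_eq_single 0 htermn]
    exact hterm0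
  have hsum : (∑' k : ℕ, a k * ∑' l : ℕ, bb l * B (z - l - k)) = P * B z := by
    rw [step1, step2, step3]
  have hsum' : (∑' k : ℕ, (-1 : ℝ) ^ k * q ^ (k * (k - 1) / 2) / qPoch q q k * p ^ k *
      ∑' l : ℕ, p ^ l * (P / qPoch q q l) * B (z - l - k)) = P * B z := hsum
  rw [hsum']
  field_simp
end

section
/- (Solution of the stationary recurrence) Let 0 ≤ q < 1, 0 ≤ s < 1, u < 0, and 0 < p < 1 with d := p/(-u(1-p)) satisfying 0 ≤ d < s. Define π_M = (p/(-s u (1-p)))^M ((s^2;q)_M/(q;q)_M) ((-sp/((1-p)u);q)_∞ / (p/(-s(1-p)u);q)_∞). Then π satisfies, for every M ≥ 0 (with π_{-1} = 0): π_M = π_{M-1} p (1 - s^2 q^{M-1})/(1 - s u) + π_M [(1-p)(1 - s u q^M)/(1 - s u) + p(-s u + s^2 q^M)/(1 - s u)] + π_{M+1}(1-p)(-s u + s u q^{M+1})/(1 - s u). -/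
/-- The stationary measure
`π_M = (p/(-su(1-p)))^M ((s²;q)_M/(q;q)_M) ((-sp/((1-p)u);q)_∞/(p/(-s(1-p)u);q)_∞)`
for `M ≥ 0`, extended by `π_{-1} = 0` (indeed `π_n = 0` for all `n < 0`). -/
noncomputable def piStat (q s u p : ℝ) (n : ℤ) : ℝ :=
  if 0 ≤ n then
    (p / (-(s * u) * (1 - p))) ^ n.toNat * (qPoch q (s ^ 2) n.toNat / qPoch q q n.toNat) *
      (qPochInf q (-(s * p) / ((1 - p) * u)) / qPochInf q (p / (-(s * (1 - p) * u))))
  else 0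

lemma piStat_natCast (q s u p : ℝ) (n : ℕ) :
    piStat q s u p (n : ℤ) =
      (p / (-(s * u) * (1 - p))) ^ n * (qPoch q (s ^ 2) n / qPoch q q n) *
        (qPochInf q (-(s * p) / ((1 - p) * u)) / qPochInf q (p / (-(s * (1 - p) * u))))
    := by simp [piStat]

set_option maxHeartbeats 2000000 in
/-- The qNB-type measure `π` solves the stationary one-vertex recurrence of the
Higher Spin Six Vertex Model with Bernoulli(p) horizontal input: for every `M ≥ 0`
(with `π_{-1} = 0`),
`π_M = π_{M-1} p (1-s²q^{M-1})/(1-su) + π_M [(1-p)(1-suq^M)/(1-su) + p(-su+s²q^M)/(1-su)]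
+ π_{M+1} (1-p)(-su+suq^{M+1})/(1-su)`. -/
theorem stationary_recurrence_solution (q s u p : ℝ) (hq0 : 0 ≤ q) (hq1 : q < 1)
    (hs0 : 0 ≤ s) (hs1 : s < 1) (hu : u < 0) (hp0 : 0 < p) (hp1 : p < 1)
    (hd : p / (-u * (1 - p)) < s) (M : ℕ) :
    piStat q s u p (M : ℤ)
      = piStat q s u p ((M : ℤ) - 1) * (p * (1 - s ^ 2 * q ^ ((M : ℤ) - 1)) / (1 - s * u))
        + piStat q s u p (M : ℤ) *
            ((1 - p) * (1 - s * u * q ^ M) / (1 - s * u)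
              + p * (-(s * u) + s ^ 2 * q ^ M) / (1 - s * u))
        + piStat q s u p ((M : ℤ) + 1) *
            ((1 - p) * (-(s * u) + s * u * q ^ (M + 1)) / (1 - s * u)) := by
  have hup : (0:ℝ) < -u := neg_pos.mpr hu
  have hp1' : (0:ℝ) < 1 - p := by linarith
  have hs : 0 < s := by
    by_contra h
    push_neg at h
    have := div_pos hp0 (mul_pos hup hp1')
    linarith
  have hsu : s * u < 0 := mul_neg_of_pos_of_neg hs hu
  have h1su : (1 : ℝ) - s * u ≠ 0 := by linarith
  have hden : -(s * u) * (1 - p) ≠ 0 := by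
    have : (0:ℝ) < -(s * u) * (1 - p) := mul_pos (by linarith) hp1'
    exact ne_of_gt this
  have hQf : ∀ j : ℕ, (0:ℝ) < 1 - q * q ^ j := by
    intro j
    have h1 : q ^ (j + 1) < 1 := pow_lt_one₀ hq0 hq1 (Nat.succ_ne_zero j)
    have h2 : q ^ (j + 1) = q * q ^ j := by rw [pow_succ]; ring
    linarith [h2 ▸ h1]
  have hQ : ∀ n : ℕ, (0:ℝ) < qPoch q q n := by
    intro n
    exact Finset.prod_pos fun j _ => hQf j
  obtain ⟨K, hK⟩ : ∃ K, qPochInf q (-(s * p) / ((1 - p) * u)) /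
      qPochInf q (p / (-(s * (1 - p) * u))) = K := ⟨_, rfl⟩
  cases M with
  | zero =>
    have e0 : piStat q s u p ((0:ℕ) - 1 : ℤ) = 0 := by norm_num [piStat]
    have eM1 : (((0:ℕ) : ℤ) + 1) = ((1:ℕ) : ℤ) := by norm_num
    rw [e0, zero_mul, zero_add, eM1, piStat_natCast, piStat_natCast, hK]
    rw [show (1:ℕ) = 0 + 1 from rfl, qPoch_succ, qPoch_succ, qPoch_zero, qPoch_zero]
    have hb1 : (1:ℝ) - q ≠ 0 := by have := hQf 0; simp at this; linarith
    have hsne : s ≠ 0 := ne_of_gt hs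
    have hune : u ≠ 0 := ne_of_lt hu
    have hpne : (1:ℝ) - p ≠ 0 := ne_of_gt hp1'
    have hsu0 : s * u ≠ 0 := ne_of_lt hsu
    have hp0' : s * u - s * u * p ≠ 0 := by
      rw [show s * u - s * u * p = s * u * (1 - p) by ring]; exact mul_ne_zero hsu0 hpne
    simp only [pow_zero, mul_one, one_mul, zero_add, pow_one]
    field_simp
    ring
  | succ N =>
    have eM1 : ((↑(N + 1) : ℤ) - 1) = ((N : ℕ) : ℤ) := by push_cast; ring
    have eM2 : ((↑(N + 1) : ℤ) + 1) = ((N + 2 : ℕ) : ℤ) := by push_cast; ring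
    obtain ⟨a, ha⟩ : ∃ x, qPoch q (s ^ 2) N = x := ⟨_, rfl⟩
    obtain ⟨b, hbq⟩ : ∃ x, qPoch q q N = x := ⟨_, rfl⟩
    obtain ⟨r, hr⟩ : ∃ x, q ^ N = x := ⟨_, rfl⟩
    obtain ⟨w, hw⟩ : ∃ x, (p / (-(s * u) * (1 - p))) ^ N = x := ⟨_, rfl⟩
    have hb : b ≠ 0 := hbq ▸ ne_of_gt (hQ N)
    have hb1 : (1:ℝ) - q * r ≠ 0 := by
      have := hQf N; rw [hr] at this; linarith
    have hb2 : (1:ℝ) - q * (r * q) ≠ 0 := by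
      have := hQf (N + 1); rw [pow_succ, hr] at this; linarith
    have E1 : piStat q s u p ((N : ℕ) : ℤ) = w * (a / b) * K := by
      rw [piStat_natCast, hK, ha, hbq, hw]
    have E2 : piStat q s u p ((N + 1 : ℕ) : ℤ)
        = (w * (p / (-(s * u) * (1 - p)))) * ((a * (1 - s ^ 2 * r)) / (b * (1 - q * r))) * K := by
      rw [piStat_natCast, hK, qPoch_succ, qPoch_succ,
        show (p / (-(s * u) * (1 - p))) ^ (N + 1)
          = (p / (-(s * u) * (1 - p))) ^ N * (p / (-(s * u) * (1 - p))) from pow_succ _ _,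
        ha, hbq, hw, hr]
    have E3 : piStat q s u p ((N + 2 : ℕ) : ℤ)
        = (w * (p / (-(s * u) * (1 - p))) * (p / (-(s * u) * (1 - p))))
            * ((a * (1 - s ^ 2 * r) * (1 - s ^ 2 * (r * q)))
              / (b * (1 - q * r) * (1 - q * (r * q)))) * K := by
      rw [piStat_natCast, hK, show N + 2 = N + 1 + 1 from rfl, qPoch_succ, qPoch_succ,
        qPoch_succ, qPoch_succ,
        show (p / (-(s * u) * (1 - p))) ^ (N + 1 + 1)
          = (p / (-(s * u) * (1 - p))) ^ N
            * ((p / (-(s * u) * (1 - p))) * (p / (-(s * u) * (1 - p)))) by ring,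
        show q ^ (N + 1) = q ^ N * q from pow_succ q N, ha, hbq, hw, hr]
      ring
    rw [eM1, eM2, E1, E2, E3]
    rw [show q ^ ((N:ℕ) : ℤ) = q ^ N from zpow_natCast q N,
      show q ^ (N + 1 + 1) = q ^ N * q * q by ring,
      show q ^ (N + 1) = q ^ N * q from pow_succ q N, hr]
    have hsne : s ≠ 0 := ne_of_gt hs
    have hune : u ≠ 0 := ne_of_lt hu
    have hpne : (1:ℝ) - p ≠ 0 := ne_of_gt hp1'
    have hsu0 : s * u ≠ 0 := ne_of_lt hsu
    have hb1' : (1:ℝ) - r * q ≠ 0 := by rw [mul_comm]; exact hb1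
    have hb2' : (1:ℝ) - r * q ^ 2 ≠ 0 := by rw [show r * q ^ 2 = q * (r * q) by ring]; exact hb2
    field_simp
    ring
end

section
/- For 0 ≤ q < 1 and parameters with 0 < -sp/(u(1-p)) and M ≥ 0, the terminating basic hypergeometric sum ₂φ₁(q^{-M}, -sp/(u - u p); 0 | q, q) := ∑_{k=0}^{M} ((q^{-M};q)_k (-sp/(u(1-p));q)_k / ((0;q)_k (q;q)_k)) q^k, interpreted with the lower parameter 0 meaning (0;q)_k = 1, equals (-sp/(u(1-p)))^M. -/
/-- The finite complex q-Pochhammer symbol `(a;q)_n = ∏_{j=0}^{n-1} (1 - a q^j)`. -/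
noncomputable def qPochC (q a : ℂ) (n : ℕ) : ℂ := ∏ j ∈ Finset.range n, (1 - a * q ^ j)

lemma qPochC_zero (q a : ℂ) : qPochC q a 0 = 1 := by simp [qPochC]

lemma qPochC_succ (q a : ℂ) (n : ℕ) :
    qPochC q a (n + 1) = qPochC q a n * (1 - a * q ^ n) := by
  simp [qPochC, Finset.prod_range_succ]

lemma qPochC_succ' (q a : ℂ) (n : ℕ) :
    qPochC q a (n + 1) = (1 - a) * qPochC q (a * q) n := by
  rw [qPochC, Finset.prod_range_succ', qPochC]
  rw [mul_comm]
  simp only [pow_zero, mul_one]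
  congr 1
  exact Finset.prod_congr rfl fun j _ => by ring

lemma qPochC_q_ne_zero (q : ℝ) (hq0 : 0 < q) (hq1 : q < 1) (k : ℕ) :
    qPochC (q : ℂ) (q : ℂ) k ≠ 0 := by
  rw [qPochC]
  apply Finset.prod_ne_zero_iff.mpr
  intro j _
  have h : (q : ℝ) ^ (j + 1) < 1 := pow_lt_one₀ hq0.le hq1 (Nat.succ_ne_zero j)
  have he : (q : ℂ) * (q : ℂ) ^ j = ((q ^ (j + 1) : ℝ) : ℂ) := by push_cast; ring
  rw [he]
  intro hc
  have h1 : ((q ^ (j + 1) : ℝ) : ℂ) = 1 := by linear_combination -hc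
  have h2 : (q : ℝ) ^ (j + 1) = 1 := by exact_mod_cast h1
  linarith

lemma qPochC_vanish (q : ℂ) (hq : q ≠ 0) (M : ℕ) :
    qPochC q ((q ^ M)⁻¹) (M + 1) = 0 := by
  rw [qPochC]
  apply Finset.prod_eq_zero (Finset.self_mem_range_succ M)
  rw [inv_mul_cancel₀ (pow_ne_zero M hq), sub_self]

/-- The `c → 0` limit of the q-Chu–Vandermonde identity: for any `x ∈ ℂ` and `M ∈ ℕ`,
`∑_{k=0}^{M} (q^{-M};q)_k (x;q)_k q^k / (q;q)_k = x^M`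
(the terminating `₂φ₁(q^{-M}, x; 0 | q, q)` with lower parameter `0`,
interpreted via `(0;q)_k = 1`). -/
theorem qChuVandermonde_c_to_zero (q : ℝ) (hq0 : 0 < q) (hq1 : q < 1) (x : ℂ) (M : ℕ) :
    ∑ k ∈ Finset.range (M + 1),
        qPochC (q : ℂ) ((q : ℂ) ^ (-(M : ℤ))) k * qPochC (q : ℂ) x k * (q : ℂ) ^ k /
          qPochC (q : ℂ) (q : ℂ) k
      = x ^ M := by
  have hQ0 : (q : ℂ) ≠ 0 := by
    simpa using hq0.ne'
  have hz : ∀ N : ℕ, ((q : ℂ)) ^ (-(N : ℤ)) = (((q : ℂ)) ^ N)⁻¹ := fun N => by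
    rw [zpow_neg, zpow_natCast]
  simp only [hz]
  set Q : ℂ := (q : ℂ) with hQdef
  have hG : ∀ k, qPochC Q Q k ≠ 0 := qPochC_q_ne_zero q hq0 hq1
  induction M generalizing x with
  | zero => simp [qPochC]
  | succ M ih =>
    -- coefficient recurrence
    have key : ∀ k : ℕ,
        qPochC Q ((Q ^ (M + 1))⁻¹) (k + 1) * qPochC Q x (k + 1) * Q ^ (k + 1) /
            qPochC Q Q (k + 1)
          + qPochC Q ((Q ^ M)⁻¹) k * qPochC Q x (k + 1) / qPochC Q Q k
        = qPochC Q ((Q ^ M)⁻¹) (k + 1) * qPochC Q x (k + 1) / qPochC Q Q (k + 1) := by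
      intro k
      have h1 : (Q ^ (M + 1))⁻¹ * Q = (Q ^ M)⁻¹ := by
        rw [pow_succ]
        field_simp
      rw [qPochC_succ' Q ((Q ^ (M + 1))⁻¹) k, h1, qPochC_succ Q ((Q ^ M)⁻¹) k,
        qPochC_succ Q Q k]
      have hGk := hG k
      have hGk1 : (1 - Q * Q ^ k) ≠ 0 := by
        have h := hG (k + 1); rw [qPochC_succ] at h; exact right_ne_zero_of_mul h
      field_simp
      ring
    -- expand x^(M+1) using the inductive hypothesis
    have expand : x ^ (M + 1) =
        (∑ k ∈ Finset.range (M + 1),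
            qPochC Q ((Q ^ M)⁻¹) k * qPochC Q x k / qPochC Q Q k)
        - ∑ k ∈ Finset.range (M + 1),
            qPochC Q ((Q ^ M)⁻¹) k * qPochC Q x (k + 1) / qPochC Q Q k := by
      rw [← Finset.sum_sub_distrib, pow_succ, ← ih x, Finset.sum_mul]
      apply Finset.sum_congr rfl
      intro k _
      rw [qPochC_succ Q x k]
      have hGk := hG k
      field_simp
      ring
    rw [expand, eq_sub_iff_add_eq]
    have hRHS : (∑ k ∈ Finset.range (M + 2),
            qPochC Q ((Q ^ M)⁻¹) k * qPochC Q x k / qPochC Q Q k)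
        = ∑ k ∈ Finset.range (M + 1),
            qPochC Q ((Q ^ M)⁻¹) k * qPochC Q x k / qPochC Q Q k := by
      rw [Finset.sum_range_succ, qPochC_vanish Q hQ0 M]
      simp
    rw [← hRHS]
    rw [Finset.sum_range_succ' (fun k =>
        qPochC Q ((Q ^ (M + 1))⁻¹) k * qPochC Q x k * Q ^ k / qPochC Q Q k) (M + 1)]
    rw [Finset.sum_range_succ' (fun k =>
        qPochC Q ((Q ^ M)⁻¹) k * qPochC Q x k / qPochC Q Q k) (M + 1)]
    rw [add_right_comm, ← Finset.sum_add_distrib]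
    simp only [qPochC_zero, pow_zero]
    rw [Finset.sum_congr rfl fun k _ => key k]
    norm_num
end

section
/- (Telescoping rational identity) For complex numbers z, w with z ≠ w, w ≠ a_k for all k, z ≠ 0, and any complex numbers a_2, ..., a_x: (1/(z−w)) [ (w^{x−1}/z^{x−1}) ∏_{k=2}^{x} (z−a_k)/(w−a_k) − 1 ] = ∑_{l=1}^{x−1} (a_{l+1}/(w−a_{l+1})) (w^{l−1}/z^{l}) ∏_{k=2}^{l} (z−a_k)/(w−a_k). -/
/-- Telescoping rational identity: for `x ≥ 2`, complex `z ≠ w`, `z ≠ 0`, `w ≠ a_k`,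
`(1/(z−w))[(w^{x−1}/z^{x−1}) ∏_{k=2}^{x} (z−a_k)/(w−a_k) − 1]
 = ∑_{l=1}^{x−1} (a_{l+1}/(w−a_{l+1})) (w^{l−1}/z^{l}) ∏_{k=2}^{l} (z−a_k)/(w−a_k)`
(empty products equal 1). -/
theorem telescoping_rational_identity (x : ℕ) (hx : 2 ≤ x) (a : ℕ → ℂ) (z w : ℂ)
    (hzw : z ≠ w) (hz : z ≠ 0) (hw : ∀ k, w ≠ a k) :
    (1 / (z - w)) *
        ((w ^ (x - 1) / z ^ (x - 1)) * ∏ k ∈ Finset.Icc 2 x, (z - a k) / (w - a k) - 1)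
      = ∑ l ∈ Finset.Icc 1 (x - 1),
          (a (l + 1) / (w - a (l + 1))) * (w ^ (l - 1) / z ^ l) *
            ∏ k ∈ Finset.Icc 2 l, (z - a k) / (w - a k) := by
  have hzw' : z - w ≠ 0 := sub_ne_zero.mpr hzw
  induction x, hx using Nat.le_induction with
  | base =>
      have hw2 : w - a 2 ≠ 0 := sub_ne_zero.mpr (hw 2)
      simp [Finset.Icc_self]
      field_simp
      ring
  | succ x hx ih =>
      have hwx : w - a (x + 1) ≠ 0 := sub_ne_zero.mpr (hw (x + 1))
      obtain ⟨n, rfl⟩ := Nat.exists_eq_add_of_le hx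
      have e0 : 2 + n + 1 - 1 = (n + 1) + 1 := by omega
      have e1 : 2 + n - 1 = n + 1 := by omega
      rw [e0, Finset.sum_Icc_succ_top (by omega : 1 ≤ (n + 1) + 1),
        show (n + 1) + 1 = 2 + n from by omega] at *
      rw [e1] at ih
      rw [Finset.prod_Icc_succ_top (by omega : 2 ≤ 2 + n + 1), ← ih]
      generalize (∏ k ∈ Finset.Icc 2 (2 + n), (z - a k) / (w - a k)) = P
      generalize a (2 + n + 1) = b at hwx ⊢
      rw [show 2 + n = (n + 1) + 1 from by omega, pow_succ, pow_succ]
      have hzp : z ^ (n + 1) ≠ 0 := pow_ne_zero _ hz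
      field_simp
      rw [Nat.add_sub_cancel]; ring
end
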